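/- Let γ be a nonnegative real eigenvalue of A with unit eigenvector u, and V = I_d. For X := (u, u/2, …, u/2) ∈ (ℝ^d)^n and any R > 0, the operator norm of the Jacobian of self-attention at RX satisfies ‖D_{RX} f‖₂ ≥ √(n-1) / (1 + (n-1) e^{-R²γ/4}). -/

import Mathlib

/-!
Move the first token of `R • X` along `u`. Attention maps configurations on the line `ℝ u` to that
line, and a token `i ≠ 0` sees one token at `s` and `n - 1` tokens at `R / 2`, so its output is a
two-point softmax mean of `s` and `R / 2`. Its derivative at `s = R` is the moved token's weight
`e^{R²γ/2} / (e^{R²γ/2} + (n - 1) e^{R²γ/4})` plus a term of sign `γ`, since raising `s` also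
raises the moved token's weight. All `n - 1` outputs `i ≠ 0` move at least at this rate under a
unit perturbation of a single token, which gives the factor `√(n - 1)`.
-/

open Matrix

/-- Self-attention (with `V = I`) as a map between sequence spaces with the Frobenius norm. -/
noncomputable def attnF (n d : ℕ) (A : Matrix (Fin d) (Fin d) ℝ) :
    PiLp 2 (fun _ : Fin n => EuclideanSpace ℝ (Fin d)) →
      PiLp 2 (fun _ : Fin n => EuclideanSpace ℝ (Fin d)) :=
  fun x => WithLp.toLp 2 (fun i => ∑ j, (Real.exp ((x i) ⬝ᵥ (Aᵀ.mulVec (x j))) /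
      ∑ l, Real.exp ((x i) ⬝ᵥ (Aᵀ.mulVec (x l)))) • x j)

open Finset Real

lemma Fin.sum_apply_ite_val_eq_zero {α M : Type*} [AddCommMonoid M] {n : ℕ} (hn : 0 < n)
    (f : α → M) (a b : α) :
    ∑ j : Fin n, f (if j.val = 0 then a else b) = f a + (n - 1) • f b := by
  obtain ⟨m, rfl⟩ := Nat.exists_eq_add_one_of_ne_zero hn.ne'
  simp [Fin.sum_univ_succ]

lemma PiLp.sqrt_card_mul_le_norm {ι : Type*} [Fintype ι] {β : ι → Type*}
    [∀ i, SeminormedAddCommGroup (β i)] (x : PiLp 2 β) (s : Finset ι) {c : ℝ} (hc : 0 ≤ c)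
    (hx : ∀ i ∈ s, c ≤ ‖x i‖) : √(#s : ℝ) * c ≤ ‖x‖ := by
  rw [PiLp.norm_eq_of_L2, ← sqrt_sq hc, ← sqrt_mul (Nat.cast_nonneg _)]
  refine sqrt_le_sqrt ?_
  calc (#s : ℝ) * c ^ 2 = ∑ i ∈ s, c ^ 2 := by simp
    _ ≤ ∑ i ∈ s, ‖x i‖ ^ 2 := sum_le_sum fun i hi => pow_le_pow_left₀ hc (hx i hi) 2
    _ ≤ ∑ i, ‖x i‖ ^ 2 := sum_le_univ_sum_of_nonneg fun i => sq_nonneg _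

lemma dotProduct_transpose_mulVec_of_mulVec_eq_smul {ι : Type*} [Fintype ι]
    {A : Matrix ι ι ℝ} {γ : ℝ} {u : ι → ℝ} (hAu : A *ᵥ u = γ • u) :
    u ⬝ᵥ Aᵀ *ᵥ u = γ * (u ⬝ᵥ u) := by
  rw [dotProduct_mulVec, vecMul_transpose, hAu, smul_dotProduct, smul_eq_mul]

lemma EuclideanSpace.dotProduct_self_eq_norm_sq {ι : Type*} [Fintype ι]
    (u : EuclideanSpace ℝ ι) : u.ofLp ⬝ᵥ u.ofLp = ‖u‖ ^ 2 := by
  rw [← real_inner_self_eq_norm_sq, EuclideanSpace.inner_eq_star_dotProduct, star_trivial]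

/-- The softmax mean of a token at `s` with logit `κ * s` and tokens at `c` of total weight `b`. -/
noncomputable def twoPointSoftmaxMean (κ b c s : ℝ) : ℝ :=
  (exp (κ * s) * s + b * c) / (exp (κ * s) + b)

lemma hasDerivAt_twoPointSoftmaxMean {κ b : ℝ} (c : ℝ) (hb : 0 ≤ b) (s : ℝ) :
    HasDerivAt (twoPointSoftmaxMean κ b c)
      (exp (κ * s) / (exp (κ * s) + b) +
        κ * (s - c) * (exp (κ * s) * b) / (exp (κ * s) + b) ^ 2) s := by
  have hexp : HasDerivAt (fun s => exp (κ * s)) (exp (κ * s) * κ) s := by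
    simpa using ((hasDerivAt_id s).const_mul κ).exp
  have hden : exp (κ * s) + b ≠ 0 := by positivity
  refine (((hexp.fun_mul (hasDerivAt_id' s)).add_const (b * c)).fun_div (hexp.add_const b)
    hden).congr_deriv ?_
  field_simp
  ring

lemma exp_div_le_deriv_twoPointSoftmaxMean {κ b c s : ℝ} (hb : 0 ≤ b) (hκ : 0 ≤ κ * (s - c)) :
    exp (κ * s) / (exp (κ * s) + b) ≤ deriv (twoPointSoftmaxMean κ b c) s := by
  rw [(hasDerivAt_twoPointSoftmaxMean c hb s).deriv]
  exact le_add_of_nonneg_right (by positivity)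

lemma one_div_le_deriv_twoPointSoftmaxMean_half {γ m : ℝ} (hγ : 0 ≤ γ) (hm : 0 ≤ m) (R : ℝ) :
    1 / (1 + m * exp (-(R ^ 2) * γ / 4)) ≤
      deriv (twoPointSoftmaxMean (R / 2 * γ) (m * exp ((R / 2) ^ 2 * γ)) (R / 2)) R := by
  have hE : exp (R / 2 * γ * R) = exp ((R / 2) ^ 2 * γ) * exp ((R / 2) ^ 2 * γ) := by
    rw [← exp_add]; ring_nf
  have hE' : exp (-(R ^ 2) * γ / 4) = (exp ((R / 2) ^ 2 * γ))⁻¹ := by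
    rw [← exp_neg]; ring_nf
  calc 1 / (1 + m * exp (-(R ^ 2) * γ / 4))
      = exp (R / 2 * γ * R) / (exp (R / 2 * γ * R) + m * exp ((R / 2) ^ 2 * γ)) := by
        rw [hE, hE']; field_simp
    _ ≤ _ := exp_div_le_deriv_twoPointSoftmaxMean (by positivity) (by nlinarith [sq_nonneg R])

noncomputable def spikeSeq (n : ℕ) {E : Type*} [NormedAddCommGroup E] [NormedSpace ℝ E] (u : E)
    (s c : ℝ) : PiLp 2 (fun _ : Fin n => E) :=
  WithLp.toLp 2 fun j => (if j.val = 0 then s else c) • u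

section spikeSeq

variable {n : ℕ} {E : Type*} [NormedAddCommGroup E] [NormedSpace ℝ E]

lemma hasDerivAt_spikeSeq (u : E) (c s : ℝ) :
    HasDerivAt (fun s => spikeSeq n u s c) (spikeSeq n u 1 0) s := by
  have h : (fun s => spikeSeq n u s c) = fun s => spikeSeq n u 0 c + s • spikeSeq n u 1 0 := by
    ext s j : 2
    by_cases hj : j.val = 0 <;> simp [spikeSeq, hj]
  rw [h]
  simpa using ((hasDerivAt_id s).smul_const (spikeSeq n u 1 0)).const_add (spikeSeq n u 0 c)

lemma norm_spikeSeq_one_zero (hn : 0 < n) (u : E) : ‖spikeSeq n u 1 0‖ = ‖u‖ := by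
  have h := Fin.sum_apply_ite_val_eq_zero hn (fun t : ℝ => ‖t • u‖ ^ 2) 1 0
  beta_reduce at h
  rw [PiLp.norm_eq_of_L2, spikeSeq, h]
  simp [sqrt_sq (norm_nonneg u)]

end spikeSeq

lemma differentiable_attnF {n d : ℕ} (hn : 0 < n) (A : Matrix (Fin d) (Fin d) ℝ) :
    Differentiable ℝ (attnF n d A) := by
  have : Nonempty (Fin n) := Fin.pos_iff_nonempty.mp hn
  refine (PiLp.continuousLinearEquiv 2 ℝ fun _ : Fin n => EuclideanSpace ℝ (Fin d)).symm
    |>.differentiable.comp (differentiable_pi.2 fun i => ?_)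
  simp only [dotProduct, mulVec, div_eq_mul_inv]
  fun_prop (disch := exact fun x => (sum_pos (fun _ _ => exp_pos _) univ_nonempty).ne')

section attnF

variable {n d : ℕ} {A : Matrix (Fin d) (Fin d) ℝ} {γ : ℝ} {u : EuclideanSpace ℝ (Fin d)}

lemma attnF_apply_of_forall_eq_smul (hu : ‖u‖ = 1) (hAu : A *ᵥ u = γ • u)
    {x : PiLp 2 (fun _ : Fin n => EuclideanSpace ℝ (Fin d))} {c : Fin n → ℝ}
    (hx : ∀ j, x j = c j • u) (i : Fin n) :
    attnF n d A x i = ((∑ j, exp (c i * c j * γ) * c j) / ∑ j, exp (c i * c j * γ)) • u := by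
  have hscore (j : Fin n) : (x i).ofLp ⬝ᵥ Aᵀ *ᵥ (x j).ofLp = c i * c j * γ := by
    simp only [hx, WithLp.ofLp_smul, mulVec_smul, smul_dotProduct, dotProduct_smul,
      dotProduct_transpose_mulVec_of_mulVec_eq_smul hAu,
      EuclideanSpace.dotProduct_self_eq_norm_sq, hu, smul_eq_mul]
    ring
  simp only [attnF, WithLp.ofLp_toLp, hscore]
  simp only [hx, smul_smul, ← sum_smul, sum_div, div_mul_eq_mul_div]

lemma attnF_spikeSeq_apply (hn : 0 < n) (hu : ‖u‖ = 1) (hAu : A *ᵥ u = γ • u) (s c : ℝ)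
    {i : Fin n} (hi : i.val ≠ 0) :
    attnF n d A (spikeSeq n u s c) i =
      twoPointSoftmaxMean (c * γ) ((n - 1) * exp (c ^ 2 * γ)) c s • u := by
  have hnum := Fin.sum_apply_ite_val_eq_zero hn (fun t => exp (c * t * γ) * t) s c
  have hden := Fin.sum_apply_ite_val_eq_zero hn (fun t => exp (c * t * γ)) s c
  rw [attnF_apply_of_forall_eq_smul hu hAu (c := fun j => if j.val = 0 then s else c)
    fun j => rfl]
  simp only [hi, if_false] at hnum hden ⊢
  rw [hnum, hden, twoPointSoftmaxMean, nsmul_eq_mul, nsmul_eq_mul, Nat.cast_pred hn]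
  ring_nf

lemma fderiv_attnF_spikeSeq_apply (hn : 0 < n) (hu : ‖u‖ = 1) (hAu : A *ᵥ u = γ • u)
    (s c : ℝ) {i : Fin n} (hi : i.val ≠ 0) :
    fderiv ℝ (attnF n d A) (spikeSeq n u s c) (spikeSeq n u 1 0) i =
      deriv (twoPointSoftmaxMean (c * γ) ((n - 1) * exp (c ^ 2 * γ)) c) s • u := by
  have hb : (0 : ℝ) ≤ (n - 1) * exp (c ^ 2 * γ) :=
    mul_nonneg (sub_nonneg.2 (Nat.one_le_cast.2 hn)) (exp_pos _).le
  have hcurve : HasDerivAt (fun t => attnF n d A (spikeSeq n u t c) i)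
      (fderiv ℝ (attnF n d A) (spikeSeq n u s c) (spikeSeq n u 1 0) i) s :=
    (PiLp.proj (𝕜 := ℝ) 2 (fun _ : Fin n => EuclideanSpace ℝ (Fin d)) i).hasFDerivAt
      |>.comp_hasDerivAt s <| (differentiable_attnF hn A _).hasFDerivAt.comp_hasDerivAt s
        (hasDerivAt_spikeSeq u c s)
  simp_rw [attnF_spikeSeq_apply hn hu hAu _ c hi] at hcurve
  exact hcurve.unique
    ((hasDerivAt_twoPointSoftmaxMean c hb s).differentiableAt.hasDerivAt.smul_const u)

end attnF

theorem attn_jacobian_lower_bound_nonneg_eigenvalue_general {n d : ℕ} (hn : 0 < n)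
    (A : Matrix (Fin d) (Fin d) ℝ) (γ : ℝ) (hγ : 0 ≤ γ)
    (u : EuclideanSpace ℝ (Fin d)) (hu : ‖u‖ = 1) (hAu : A.mulVec u = γ • u)
    (R : ℝ)
    (X : PiLp 2 (fun _ : Fin n => EuclideanSpace ℝ (Fin d)))
    (hX : X = fun i : Fin n => if i.val = 0 then u else (1 / 2 : ℝ) • u) :
    Real.sqrt ((n : ℝ) - 1) / (1 + ((n : ℝ) - 1) * Real.exp (-(R ^ 2) * γ / 4)) ≤
      ‖fderiv ℝ (attnF n d A) (R • X)‖ := by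
  have hm : (0 : ℝ) ≤ n - 1 := sub_nonneg.2 (Nat.one_le_cast.2 hn)
  have hRX : R • X = spikeSeq n u R (R / 2) := by
    ext j : 1
    by_cases hj : j.val = 0 <;> simp [spikeSeq, hX, hj, smul_smul, div_eq_mul_inv]
  have hcard : #(univ.erase (⟨0, hn⟩ : Fin n)) = n - 1 := by simp
  set L := fderiv ℝ (attnF n d A) (spikeSeq n u R (R / 2))
  calc √((n : ℝ) - 1) / (1 + (n - 1) * exp (-(R ^ 2) * γ / 4))
      = √(#(univ.erase (⟨0, hn⟩ : Fin n)) : ℝ) *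
          (1 / (1 + (n - 1) * exp (-(R ^ 2) * γ / 4))) := by
        rw [hcard, Nat.cast_pred hn, mul_one_div]
    _ ≤ ‖L (spikeSeq n u 1 0)‖ := PiLp.sqrt_card_mul_le_norm _ _ (by positivity) fun i hi => by
        rw [fderiv_attnF_spikeSeq_apply hn hu hAu _ _ fun h => (mem_erase.1 hi).1 (Fin.ext h),
          norm_smul, hu, mul_one, norm_eq_abs]
        exact (one_div_le_deriv_twoPointSoftmaxMean_half hγ hm R).trans (le_abs_self _)
    _ ≤ ‖L‖ := by simpa [norm_spikeSeq_one_zero hn, hu] using L.le_opNorm (spikeSeq n u 1 0)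
    _ = _ := by rw [hRX]

/-- lower bound on the Jacobian norm of self-attention at
`R·(u, u/2, …, u/2)` for a nonnegative eigenvalue `γ` of `A` with unit eigenvector `u`. -/
theorem attn_jacobian_lower_bound_nonneg_eigenvalue {n d : ℕ} (hn : 0 < n)
    (A : Matrix (Fin d) (Fin d) ℝ) (γ : ℝ) (hγ : 0 ≤ γ)
    (u : EuclideanSpace ℝ (Fin d)) (hu : ‖u‖ = 1) (hAu : A.mulVec u = γ • u)
    (R : ℝ) (hR : 0 < R)
    (X : PiLp 2 (fun _ : Fin n => EuclideanSpace ℝ (Fin d)))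
    (hX : X = fun i : Fin n => if i.val = 0 then u else (1 / 2 : ℝ) • u) :
    Real.sqrt ((n : ℝ) - 1) / (1 + ((n : ℝ) - 1) * Real.exp (-(R ^ 2) * γ / 4)) ≤
      ‖fderiv ℝ (attnF n d A) (R • X)‖ :=
  attn_jacobian_lower_bound_nonneg_eigenvalue_general hn A γ hγ u hu hAu R X hX
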